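/- arXiv:2104.11547 — 5 statements merged into one kernel-verified Lean document; each statement's English description precedes it below -/
import Mathlib

section
/- Let X be a countably generated measurable space. Then the space of probability measures P(X) with its evaluation σ-algebra is both countably generated and countably separated. In particular, two probability measures on X agreeing on a generating π-system are equal. -/
/-!
Fix a countable π-system `S` generating the σ-algebra of `X` (finite intersections of a countable
generating family). By Dynkin's π-λ theorem a probability measure is determined by its values on
`S`, and for the same reason the evaluation σ-algebra on `P(X)` is already generated by the
countably many maps `μ ↦ μ s`, `s ∈ S`, each of which pulls back the countably generated
σ-algebra of `ℝ≥0∞`. The evaluation σ-algebra separates points since `{ρ | ρ A = μ A}` is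
measurable, and a countably generated σ-algebra that separates points is countably separated.
-/

open MeasureTheory

noncomputable instance probMeasurableSpace {X : Type*} [MeasurableSpace X] :
    MeasurableSpace (ProbabilityMeasure X) :=
  Subtype.instMeasurableSpace

/-- A measurable space is countably separated if some countable family of measurable sets
separates its points. -/
def CountablySeparatedSpace (X : Type*) [MeasurableSpace X] : Prop :=
  ∃ E : Set (Set X), E.Countable ∧ (∀ A ∈ E, MeasurableSet A) ∧
    ∀ x y : X, x ≠ y → ∃ A ∈ E, Xor' (x ∈ A) (y ∈ A)

namespace MeasurableSpace

theorem CountablyGenerated.iSup {α ι : Type*} [Countable ι] {m : ι → MeasurableSpace α}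
    (h : ∀ i, @CountablyGenerated α (m i)) : @CountablyGenerated α (⨆ i, m i) := by
  choose b hbc hb using fun i => (h i).isCountablyGenerated
  refine @CountablyGenerated.mk α (⨆ i, m i) ⟨⋃ i, b i, Set.countable_iUnion hbc, ?_⟩
  simp_rw [hb, iSup_generateFrom]

theorem exists_countable_isPiSystem_generateFrom_eq {α : Type*} [m : MeasurableSpace α]
    [CountablyGenerated α] :
    ∃ S : Set (Set α), S.Countable ∧ IsPiSystem S ∧ m = generateFrom S := by
  set s := natGeneratingSequence α
  refine ⟨piiUnionInter (fun n => {s n}) Set.univ, ?_,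
    isPiSystem_piiUnionInter _ (fun _ => .singleton _) _, ?_⟩
  · rw [piiUnionInter_singleton_left]
    refine (Set.countable_range fun t : Finset ℕ => ⋂ i ∈ t, s i).mono ?_
    rintro _ ⟨t, -, rfl⟩
    exact ⟨t, rfl⟩
  · rw [generateFrom_piiUnionInter_singleton_left]
    simp only [Set.mem_univ, true_and]
    exact (generateFrom_natGeneratingSequence α).symm

end MeasurableSpace

open MeasurableSpace

theorem countablySeparatedSpace_of_countablySeparated {α : Type*} [MeasurableSpace α]
    [CountablySeparated α] : CountablySeparatedSpace α := by
  obtain ⟨S, hSc, hSm, hsep⟩ := exists_countable_separating α MeasurableSet Set.univ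
  refine ⟨S, hSc, hSm, fun x y hxy => ?_⟩
  by_contra! h
  exact hxy (hsep x trivial y trivial fun A hA => (not_xor _ _).1 (h A hA))

namespace MeasureTheory.ProbabilityMeasure

variable {α : Type*} [mα : MeasurableSpace α]

instance separatesPoints : SeparatesPoints (ProbabilityMeasure α) := by
  refine ⟨fun μ ν h => Subtype.ext <| Measure.ext fun A hA => ?_⟩
  have heval : Measurable fun ρ : ProbabilityMeasure α => (ρ : Measure α) A :=
    (Measure.measurable_coe hA).comp measurable_subtype_coe
  exact (h _ (heval (measurableSet_singleton ((μ : Measure α) A))) rfl).symm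

theorem measurableSpace_eq_iSup_comap {S : Set (Set α)} (hgen : mα = generateFrom S)
    (hpi : IsPiSystem S) :
    probMeasurableSpace =
      ⨆ s : S, MeasurableSpace.comap (fun μ : ProbabilityMeasure α => (μ : Measure α) s)
        inferInstance := by
  refine le_antisymm (Measurable.comap_le (f := ((↑) : ProbabilityMeasure α → Measure α)) ?_)
    (iSup_le fun s => ?_)
  · exact .measure_of_isPiSystem_of_isProbabilityMeasure hgen hpi fun s hs =>
      Measurable.of_comap_le (le_iSup_of_le (⟨s, hs⟩ : S) le_rfl)
  · exact ((Measure.measurable_coe (hgen ▸ measurableSet_generateFrom s.2)).comp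
      measurable_subtype_coe).comap_le

instance countablyGenerated [CountablyGenerated α] : CountablyGenerated (ProbabilityMeasure α) := by
  obtain ⟨S, hSc, hpi, hgen⟩ := exists_countable_isPiSystem_generateFrom_eq (α := α)
  have : Countable S := hSc.to_subtype
  rw [measurableSpace_eq_iSup_comap hgen hpi]
  exact CountablyGenerated.iSup fun _ => .comap _

end MeasureTheory.ProbabilityMeasure

/-- If `X` is countably generated, then the space of probability measures `P(X)` with its
evaluation σ-algebra is countably generated and countably separated; in particular two
probability measures on `X` agreeing on a generating π-system are equal. -/
theorem stmt8 {X : Type*} [mX : MeasurableSpace X] [MeasurableSpace.CountablyGenerated X] :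
    MeasurableSpace.CountablyGenerated (ProbabilityMeasure X) ∧
    CountablySeparatedSpace (ProbabilityMeasure X) ∧
    ∀ E : Set (Set X), mX = MeasurableSpace.generateFrom E → IsPiSystem E →
      ∀ μ ν : Measure X, IsProbabilityMeasure μ → IsProbabilityMeasure ν →
        (∀ A ∈ E, μ A = ν A) → μ = ν :=
  ⟨inferInstance, countablySeparatedSpace_of_countablySeparated,
    fun E hE hEpi _ _ _ _ hμν => ext_of_generate_finite E hE hEpi hμν (by simp)⟩
end

section
/- Let Y = ℝ^D (with Borel σ-algebra) and Z any measurable space. Suppose F : Y × Z → [0,1] satisfies: (i) for each fixed y, the map z ↦ F(y,z) is measurable; (ii) for each fixed z, the map y ↦ F(y,z) is monotone non-decreasing (coordinatewise) and continuous from above. Then F is jointly measurable with respect to the product σ-algebra on Y × Z. -/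
/-- A function `F : ℝ^D × Z → [0,1]` which is measurable in `z` for each fixed `y`, and
monotone non-decreasing (coordinatewise) and continuous from above in `y` for each fixed
`z`, is jointly measurable. -/
theorem stmt9 {D : ℕ} {Z : Type*} [MeasurableSpace Z]
    (F : (Fin D → ℝ) → Z → ℝ)
    (hrange : ∀ y z, F y z ∈ Set.Icc (0 : ℝ) 1)
    (hmeas : ∀ y : Fin D → ℝ, Measurable fun z => F y z)
    (hmono : ∀ z : Z, Monotone fun y => F y z)
    (hcont : ∀ (z : Z) (y : Fin D → ℝ) (yn : ℕ → Fin D → ℝ),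
      Antitone yn → (∀ n, y ≤ yn n) →
      Filter.Tendsto yn Filter.atTop (nhds y) →
      Filter.Tendsto (fun n => F (yn n) z) Filter.atTop (nhds (F y z))) :
    Measurable fun p : (Fin D → ℝ) × Z => F p.1 p.2 := by
  -- dyadic upper approximation
  set g : ℕ → (Fin D → ℝ) → (Fin D → ℝ) :=
    fun n y d => (⌈y d * 2 ^ n⌉ : ℝ) / 2 ^ n with hg
  have hpow : ∀ n : ℕ, (0:ℝ) < 2 ^ n := fun n => by positivity
  have hle : ∀ n y, y ≤ g n y := by
    intro n y d
    rw [hg, le_div_iff₀ (hpow n)]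
    exact Int.le_ceil _
  have hanti : ∀ y, Antitone fun n => g n y := by
    intro y
    intro m n hmn d
    simp only [hg]
    rw [div_le_div_iff₀ (hpow n) (hpow m)]
    have h1 : (⌈y d * 2 ^ n⌉ : ℤ) ≤ ⌈y d * 2 ^ m⌉ * 2 ^ (n - m) := by
      rw [Int.ceil_le]
      push_cast
      calc y d * 2 ^ n = y d * 2 ^ m * 2 ^ (n - m) := by
            rw [mul_assoc, ← pow_add]
            congr 2
            omega
        _ ≤ (⌈y d * 2 ^ m⌉ : ℝ) * 2 ^ (n - m) := by
            exact mul_le_mul_of_nonneg_right (Int.le_ceil _) (by positivity)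
    have h2 : (⌈y d * 2 ^ n⌉ : ℤ) * 2 ^ m ≤ ⌈y d * 2 ^ m⌉ * 2 ^ n := by
      calc (⌈y d * 2 ^ n⌉ : ℤ) * 2 ^ m ≤ ⌈y d * 2 ^ m⌉ * 2 ^ (n - m) * 2 ^ m :=
            mul_le_mul_of_nonneg_right h1 (by positivity)
        _ = ⌈y d * 2 ^ m⌉ * 2 ^ n := by
            rw [mul_assoc, ← pow_add]
            congr 2
            omega
    exact_mod_cast h2
  have htend : ∀ y, Filter.Tendsto (fun n => g n y) Filter.atTop (nhds y) := by
    intro y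
    rw [tendsto_pi_nhds]
    intro d
    have hub : ∀ n : ℕ, g n y d ≤ y d + (1/2) ^ n := by
      intro n
      simp only [hg]
      rw [div_le_iff₀ (hpow n)]
      have := (Int.ceil_lt_add_one (y d * 2 ^ n)).le
      calc (⌈y d * 2 ^ n⌉ : ℝ) ≤ y d * 2 ^ n + 1 := this
        _ ≤ (y d + (1/2) ^ n) * 2 ^ n := by
            rw [add_mul]
            gcongr
            rw [div_pow, one_pow, div_mul_cancel₀]
            positivity
    have h1 : Filter.Tendsto (fun n : ℕ => y d + (1/2:ℝ) ^ n) Filter.atTop (nhds (y d)) := by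
      have := tendsto_pow_atTop_nhds_zero_of_lt_one (by norm_num : (0:ℝ) ≤ 1/2) (by norm_num)
      simpa using (tendsto_const_nhds (x := y d)).add this
    exact tendsto_of_tendsto_of_tendsto_of_le_of_le tendsto_const_nhds h1
      (fun n => hle n y d) hub
  -- each approximant is jointly measurable
  have hmeasn : ∀ n, Measurable fun p : (Fin D → ℝ) × Z => F (g n p.1) p.2 := by
    intro n
    have he : Measurable fun y : Fin D → ℝ => fun d => ⌈y d * 2 ^ n⌉ := by
      apply measurable_pi_lambda
      intro d
      exact Int.measurable_ceil.comp ((measurable_pi_apply d).mul_const _)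
    have hH : Measurable fun q : Z × (Fin D → ℤ) => F (fun d => (q.2 d : ℝ) / 2 ^ n) q.1 :=
      measurable_from_prod_countable_left (fun k => by simpa using hmeas fun d => (k d : ℝ) / 2 ^ n)
    have : (fun p : (Fin D → ℝ) × Z => F (g n p.1) p.2)
        = fun p => (fun q : Z × (Fin D → ℤ) => F (fun d => (q.2 d : ℝ) / 2 ^ n) q.1)
            (p.2, fun d => ⌈p.1 d * 2 ^ n⌉) := by
      funext p
      simp [hg]
    rw [this]
    exact hH.comp (measurable_snd.prodMk (he.comp measurable_fst))
  exact measurable_of_tendsto_metrizable' Filter.atTop hmeasn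
    (tendsto_pi_nhds.mpr fun p => hcont p.2 p.1 (fun n => g n p.1) (hanti p.1)
      (fun n => hle n p.1) (htend p.1))
end

section
/- Let P be a probability measure on ℝ̄ = [-∞,∞], λ the uniform distribution on [0,1], and P̄ := P ⊗ λ on ℝ̄ × [0,1]. Define E(x,u) := P([-∞,x)) + u·P({x}). Then E is uniformly distributed under P̄, i.e. P̄({(x,u) | E(x,u) ≤ e}) = e for every e ∈ [0,1]. -/
/-!
Let `x₀` be the `e`-quantile of `P`, so that `P [⊥, x₀) ≤ e ≤ P [⊥, x₀]`. Integrate the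
`λ`-measure of the fibres `{u | E (x, u) ≤ e}` against `P`: for `x < x₀` the fibre is all of
`[0, 1]`, for `x > x₀` it is `λ`-null for `P`-almost every `x` (a flat stretch of the
distribution function carries no mass), and the fibre over `x₀` is
`[0, (e - P [⊥, x₀)) / P {x₀}]`, which contributes exactly the missing `e - P [⊥, x₀)`.
-/

open MeasureTheory Set Filter
open scoped ENNReal

section SectionMeasure

variable {a b e : ℝ}

theorem restrict_Icc_setOf_add_mul_le_eq_one (hb : 0 ≤ b) (h : a + b ≤ e) :
    volume.restrict (Icc (0 : ℝ) 1) {u | a + u * b ≤ e} = 1 := by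
  have hsub : Icc (0 : ℝ) 1 ⊆ {u | a + u * b ≤ e} := fun u ⟨hu0, hu1⟩ => by
    simp only [mem_ofPred_eq]; nlinarith
  rw [Measure.restrict_apply' measurableSet_Icc, inter_eq_right.2 hsub, Real.volume_Icc]
  norm_num

theorem restrict_Icc_setOf_add_mul_le_eq_zero (hea : e ≤ a) (h : e < a + b) :
    volume.restrict (Icc (0 : ℝ) 1) {u | a + u * b ≤ e} = 0 := by
  rw [Measure.restrict_apply' measurableSet_Icc]
  refine measure_mono_null (fun u ⟨hu, hu0, hu1⟩ => ?_) (measure_singleton (0 : ℝ))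
  simp only [mem_ofPred_eq] at hu
  -- `e < a + b` forces `b > 0`, and then `u * b ≤ e - a ≤ 0` forces `u = 0`
  have hb' : 0 < b := by nlinarith
  exact mem_singleton_iff.2 (by nlinarith)

theorem restrict_Icc_setOf_add_mul_le_mul (hb : 0 ≤ b) (hae : a ≤ e) (heb : e ≤ a + b) :
    volume.restrict (Icc (0 : ℝ) 1) {u | a + u * b ≤ e} * ENNReal.ofReal b =
      ENNReal.ofReal (e - a) := by
  rcases hb.eq_or_lt with rfl | hb
  · simp [show e = a by linarith]
  have hsec : {u | a + u * b ≤ e} ∩ Icc 0 1 = Icc 0 ((e - a) / b) := by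
    ext u
    simp only [mem_inter_iff, mem_ofPred_eq, mem_Icc, le_div_iff₀ hb]
    constructor
    · rintro ⟨hu, hu0, -⟩
      exact ⟨hu0, by linarith⟩
    · rintro ⟨hu0, hu⟩
      exact ⟨by linarith, hu0, by nlinarith⟩
  rw [Measure.restrict_apply' measurableSet_Icc, hsec, Real.volume_Icc, sub_zero,
    ← ENNReal.ofReal_mul (div_nonneg (by linarith) hb.le), div_mul_cancel₀ _ hb.ne']

end SectionMeasure

section Quantile

variable {α : Type*} [CompleteLinearOrder α] [MeasurableSpace α]

noncomputable def quantile (μ : Measure α) (c : ℝ≥0∞) : α := sInf {x | c ≤ μ (Iic x)}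

theorem measure_Iic_lt_of_lt_quantile {μ : Measure α} {c : ℝ≥0∞} {x : α}
    (hx : x < quantile μ c) : μ (Iic x) < c :=
  lt_of_not_ge fun h => (sInf_le (show x ∈ {x | c ≤ μ (Iic x)} from h)).not_gt hx

variable [TopologicalSpace α] [OrderTopology α] [FirstCountableTopology α] (μ : Measure α)

theorem measure_le_iSup_measure_Iic (s : Set α) : μ s ≤ ⨆ x ∈ s, μ (Iic x) := by
  rcases s.eq_empty_or_nonempty with rfl | hs
  · simp
  by_cases hmem : sSup s ∈ s
  · exact (measure_mono fun x hx => le_sSup hx).trans (le_iSup₂_of_le (sSup s) hmem le_rfl)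
  obtain ⟨y, hy_mono, hy_lim, hy_mem⟩ := exists_seq_tendsto_sSup hs (OrderTop.bddAbove s)
  have hcover : s ⊆ ⋃ n, Iic (y n) := fun x hx => by
    have hlt : x < sSup s := (le_sSup hx).lt_of_ne fun h => hmem (h ▸ hx)
    obtain ⟨n, hn⟩ := (hy_lim.eventually (eventually_gt_nhds hlt)).exists
    exact mem_iUnion.2 ⟨n, hn.le⟩
  calc μ s ≤ μ (⋃ n, Iic (y n)) := measure_mono hcover
    _ = ⨆ n, μ (Iic (y n)) :=
      Monotone.measure_iUnion fun m n hmn => Iic_subset_Iic.2 (hy_mono hmn)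
    _ ≤ ⨆ x ∈ s, μ (Iic x) := iSup_le fun n => le_iSup₂_of_le (y n) (hy_mem n) le_rfl

theorem iInf_measure_Iic_le_measure_Iic_sInf [OpensMeasurableSpace α] [IsFiniteMeasure μ]
    {s : Set α} (hs : s.Nonempty) : ⨅ x ∈ s, μ (Iic x) ≤ μ (Iic (sInf s)) := by
  obtain ⟨y, hy_anti, hy_lim, hy_mem⟩ := exists_seq_tendsto_sInf hs (OrderBot.bddBelow s)
  have hIic : Iic (sInf s) = ⋂ n, Iic (y n) := by
    ext z
    simp only [mem_Iic, mem_iInter]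
    exact ⟨fun hz n => hz.trans (sInf_le (hy_mem n)),
      fun hz => ge_of_tendsto hy_lim (Eventually.of_forall hz)⟩
  rw [hIic, Antitone.measure_iInter (fun m n hmn => Iic_subset_Iic.2 (hy_anti hmn))
    (fun n => measurableSet_Iic.nullMeasurableSet) ⟨0, measure_ne_top μ _⟩]
  exact le_iInf fun n => iInf₂_le (y n) (hy_mem n)

variable {μ} {c : ℝ≥0∞}

theorem measure_Iio_quantile_le : μ (Iio (quantile μ c)) ≤ c :=
  (measure_le_iSup_measure_Iic μ _).trans <|
    iSup₂_le fun _ hx => (measure_Iic_lt_of_lt_quantile hx).le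

theorem le_measure_Iic_quantile [OpensMeasurableSpace α] [IsFiniteMeasure μ] (hc : c ≤ μ univ) :
    c ≤ μ (Iic (quantile μ c)) := by
  have hne : {x | c ≤ μ (Iic x)}.Nonempty := ⟨⊤, show c ≤ μ (Iic ⊤) by rwa [Iic_top]⟩
  exact (le_iInf₂ fun x (hx : c ≤ μ (Iic x)) => hx).trans
    (iInf_measure_Iic_le_measure_Iic_sInf μ hne)

/-- Flat stretches of the distribution function above `x₀` carry no mass. -/
theorem ae_lt_measure_Iic_of_le_measure_Iic [OpensMeasurableSpace α] [IsFiniteMeasure μ] {x₀ : α}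
    (hc : c ≤ μ (Iic x₀)) :
    ∀ᵐ x ∂μ, x₀ < x → c < μ (Iic x) := by
  set L := {x | μ (Iic x) ≤ c}
  have hle : μ (Iic x₀ ∪ L) ≤ μ (Iic x₀) :=
    (measure_le_iSup_measure_Iic μ _).trans <| iSup₂_le fun x hx =>
      hx.elim (fun h => measure_mono (Iic_subset_Iic.2 h)) fun h => le_trans h hc
  have hnull : μ (L \ Iic x₀) = 0 := by
    rw [← union_sdiff_left, measure_sdiff subset_union_left measurableSet_Iic.nullMeasurableSet
      (measure_ne_top μ _), tsub_eq_zero_of_le hle]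
  refine measure_mono_null (fun x hx => ?_) hnull
  obtain ⟨hx₀, hxc⟩ := Classical.not_imp.1 hx
  exact ⟨not_lt.1 hxc, not_le.2 hx₀⟩

end Quantile

theorem lintegral_eq_setLIntegral_Iio_add_mul_add_setLIntegral_Ioi {α : Type*} [LinearOrder α]
    [TopologicalSpace α] [OrderClosedTopology α] [MeasurableSpace α] [OpensMeasurableSpace α]
    [MeasurableSingletonClass α] (μ : Measure α) (f : α → ℝ≥0∞) (x₀ : α) :
    ∫⁻ x, f x ∂μ = ∫⁻ x in Iio x₀, f x ∂μ + f x₀ * μ {x₀} + ∫⁻ x in Ioi x₀, f x ∂μ := by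
  rw [← lintegral_add_compl f measurableSet_Iio, compl_Iio, ← Ioi_insert,
    lintegral_insert (s := Ioi x₀) (lt_irrefl x₀), add_assoc]

section InterpolatedCDF

variable {α : Type*} [CompleteLinearOrder α] [TopologicalSpace α] [OrderTopology α]
  [MeasurableSpace α] [BorelSpace α]

/-- The function `E` of the statement. -/
noncomputable def interpolatedCDF (μ : Measure α) (p : α × ℝ) : ℝ :=
  (μ (Iio p.1)).toReal + p.2 * (μ {p.1}).toReal

variable (μ : Measure α) [IsFiniteMeasure μ]

theorem measure_Iic_toReal_eq_add (x : α) :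
    (μ (Iic x)).toReal = (μ (Iio x)).toReal + (μ {x}).toReal := by
  rw [← Iio_union_right, measure_union (by simp) (measurableSet_singleton x),
    ENNReal.toReal_add (measure_ne_top μ _) (measure_ne_top μ _)]

theorem measurable_interpolatedCDF : Measurable (interpolatedCDF μ) := by
  have hIio : Measurable fun x : α => (μ (Iio x)).toReal :=
    ENNReal.measurable_toReal.comp
      (Monotone.measurable fun _ _ h => measure_mono (μ := μ) (Iio_subset_Iio h))
  have hIic : Measurable fun x : α => (μ (Iic x)).toReal :=
    ENNReal.measurable_toReal.comp
      (Monotone.measurable fun _ _ h => measure_mono (μ := μ) (Iic_subset_Iic.2 h))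
  have hsingleton : Measurable fun x : α => (μ {x}).toReal := by
    convert hIic.sub hIio using 1
    exact funext fun x => by rw [Pi.sub_apply, measure_Iic_toReal_eq_add, add_sub_cancel_left]
  exact (hIio.comp measurable_fst).add (measurable_snd.mul (hsingleton.comp measurable_fst))

variable {μ} {e : ℝ} {x₀ : α}

theorem setLIntegral_Iio_restrict_Icc_setOf_interpolatedCDF_le
    (h : ∀ x < x₀, μ (Iic x) < ENNReal.ofReal e) :
    ∫⁻ x in Iio x₀, volume.restrict (Icc (0 : ℝ) 1) {u | interpolatedCDF μ (x, u) ≤ e} ∂μ =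
      μ (Iio x₀) := by
  rw [setLIntegral_congr_fun measurableSet_Iio (g := fun _ => 1) fun x hx => ?_, setLIntegral_one]
  have hlt := (ENNReal.lt_ofReal_iff_toReal_lt (measure_ne_top μ _)).1 (h x hx)
  rw [measure_Iic_toReal_eq_add] at hlt
  exact restrict_Icc_setOf_add_mul_le_eq_one ENNReal.toReal_nonneg hlt.le

theorem restrict_Icc_setOf_interpolatedCDF_le_mul_measure_singleton (he : 0 ≤ e)
    (hIio : μ (Iio x₀) ≤ ENNReal.ofReal e) (hIic : ENNReal.ofReal e ≤ μ (Iic x₀)) :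
    volume.restrict (Icc (0 : ℝ) 1) {u | interpolatedCDF μ (x₀, u) ≤ e} * μ {x₀} =
      ENNReal.ofReal (e - (μ (Iio x₀)).toReal) := by
  have hae := ENNReal.toReal_le_of_le_ofReal he hIio
  have heb := (ENNReal.ofReal_le_iff_le_toReal (measure_ne_top μ _)).1 hIic
  rw [measure_Iic_toReal_eq_add] at heb
  rw [← ENNReal.ofReal_toReal (measure_ne_top μ {x₀})]
  exact restrict_Icc_setOf_add_mul_le_mul ENNReal.toReal_nonneg hae heb

variable [FirstCountableTopology α]

theorem setLIntegral_Ioi_restrict_Icc_setOf_interpolatedCDF_le (he : 0 ≤ e)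
    (hIic : ENNReal.ofReal e ≤ μ (Iic x₀)) :
    ∫⁻ x in Ioi x₀, volume.restrict (Icc (0 : ℝ) 1) {u | interpolatedCDF μ (x, u) ≤ e} ∂μ = 0 := by
  rw [setLIntegral_congr_fun_ae measurableSet_Ioi (g := fun _ => 0) ?_, lintegral_zero]
  filter_upwards [ae_lt_measure_Iic_of_le_measure_Iic hIic] with x hx hx₀
  have hea : e ≤ (μ (Iio x)).toReal := (ENNReal.ofReal_le_iff_le_toReal (measure_ne_top μ _)).1
    (hIic.trans (measure_mono (Iic_subset_Iio.2 hx₀)))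
  have heab := (ENNReal.ofReal_lt_iff_lt_toReal he (measure_ne_top μ _)).1 (hx hx₀)
  rw [measure_Iic_toReal_eq_add] at heab
  exact restrict_Icc_setOf_add_mul_le_eq_zero hea heab

theorem lintegral_restrict_Icc_setOf_interpolatedCDF_le (μ : Measure α) [IsProbabilityMeasure μ]
    (he₀ : 0 ≤ e) (he₁ : e ≤ 1) :
    ∫⁻ x, volume.restrict (Icc (0 : ℝ) 1) {u | interpolatedCDF μ (x, u) ≤ e} ∂μ =
      ENNReal.ofReal e := by
  set x₀ := quantile μ (ENNReal.ofReal e)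
  have hIio : μ (Iio x₀) ≤ ENNReal.ofReal e := measure_Iio_quantile_le
  have hIic : ENNReal.ofReal e ≤ μ (Iic x₀) := le_measure_Iic_quantile (by simpa using he₁)
  rw [lintegral_eq_setLIntegral_Iio_add_mul_add_setLIntegral_Ioi μ _ x₀,
    setLIntegral_Iio_restrict_Icc_setOf_interpolatedCDF_le fun _ => measure_Iic_lt_of_lt_quantile,
    restrict_Icc_setOf_interpolatedCDF_le_mul_measure_singleton he₀ hIio hIic,
    setLIntegral_Ioi_restrict_Icc_setOf_interpolatedCDF_le he₀ hIic, add_zero]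
  nth_rw 1 [← ENNReal.ofReal_toReal (measure_ne_top μ (Iio x₀))]
  rw [← ENNReal.ofReal_add ENNReal.toReal_nonneg
      (sub_nonneg.2 (ENNReal.toReal_le_of_le_ofReal he₀ hIio)), add_sub_cancel]

theorem measure_prod_setOf_interpolatedCDF_le (μ : Measure α) [IsProbabilityMeasure μ]
    (he₀ : 0 ≤ e) (he₁ : e ≤ 1) :
    (μ.prod (volume.restrict (Icc (0 : ℝ) 1))) {p | interpolatedCDF μ p ≤ e} =
      ENNReal.ofReal e := by
  rw [Measure.prod_apply (measurableSet_le (measurable_interpolatedCDF μ) measurable_const)]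
  exact lintegral_restrict_Icc_setOf_interpolatedCDF_le μ he₀ he₁

end InterpolatedCDF

/-- Let `P` be a probability measure on `ℝ̄ = [-∞,∞]`, `λ` the uniform distribution on
`[0,1]` and `P̄ = P ⊗ λ`. Then the interpolated CDF `E(x,u) = P([-∞,x)) + u·P({x})` is
uniformly distributed under `P̄`: `P̄(E ≤ e) = e` for every `e ∈ [0,1]`. -/
theorem stmt13 (P : Measure EReal) [IsProbabilityMeasure P]
    (E : EReal × ℝ → ℝ)
    (hE : ∀ x u, E (x, u) = (P (Set.Iio x)).toReal + u * (P {x}).toReal) :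
    ∀ e ∈ Set.Icc (0 : ℝ) 1,
      (P.prod (volume.restrict (Set.Icc (0 : ℝ) 1))) {p | E p ≤ e} = ENNReal.ofReal e := by
  rintro e ⟨he₀, he₁⟩
  obtain rfl : E = interpolatedCDF P := funext fun p => hE p.1 p.2
  exact measure_prod_setOf_interpolatedCDF_le P he₀ he₁
end

section
/- Let P be a probability measure on ℝ̄ with CDF F, quantile function R(t) := inf{x | F(x) ≥ t}, and set C := ℝ̄ \ R([0,1]). Then C is measurable and P(C) = 0; equivalently, R(F(x)) = x for P-almost all x ∈ ℝ̄. -/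
/-!
A CDF is right-continuous, so `t ≤ F (R t)` for every `t ≤ 1`; with `R (F x) ≤ x` and the
monotonicity of `R` this shows that `R([0,1])` is exactly the set of fixed points of `R ∘ F`.
If `R (F x) < x`, then `F` is constant on some `[y, x]` with `y < x`, i.e. `x` is the right
endpoint of a null interval `(y, x]`. Such a point either lies outside the support of `P`, or is
isolated from the left within the support; the latter points are countable, and none of them
carries mass.
-/

open MeasureTheory Set Filter Topology

section NullRightEndpoints

variable {X : Type*} [LinearOrder X] [TopologicalSpace X] [OrderTopology X]
  [SecondCountableTopology X] [MeasurableSpace X]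

theorem measure_setOf_exists_lt_measure_Ioc_eq_zero (μ : Measure X) :
    μ {x | ∃ y < x, μ (Ioc y x) = 0} = 0 := by
  set S := {x | ∃ y < x, μ (Ioc y x) = 0}
  set T := {x | x ∈ μ.support ∧ 𝓝[μ.support ∩ Iio x] x = ⊥}
  have hST : S ⊆ μ.supportᶜ ∪ (S ∩ T) := by
    intro x hxS
    by_cases hx : x ∈ μ.support
    · obtain ⟨y, hyx, hy⟩ := id hxS
      have hgap : Ioo y x ⊆ μ.supportᶜ := Measure.subset_compl_support_of_isOpen isOpen_Ioo
        (measure_mono_null Ioo_subset_Ioc_self hy)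
      refine Or.inr ⟨hxS, hx, ?_⟩
      rw [← empty_mem_iff_bot, mem_nhdsWithin]
      refine ⟨Ioi y, isOpen_Ioi, hyx, ?_⟩
      rintro z ⟨hzy, hz, hzx⟩
      exact hgap ⟨hzy, hzx⟩ hz
    · exact Or.inl hx
  have hT : μ (S ∩ T) = 0 := by
    rw [← biUnion_of_singleton (S ∩ T),
      measure_biUnion_null_iff (countable_setOfPred_isolated_left_within.mono inter_subset_right)]
    rintro x ⟨⟨y, hyx, hy⟩, -⟩
    exact measure_mono_null (singleton_subset_iff.2 (right_mem_Ioc.2 hyx)) hy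
  exact measure_mono_null hST (measure_union_null Measure.measure_compl_support hT)

end NullRightEndpoints

theorem monotone_toReal_measure_Iic {X : Type*} [Preorder X] [MeasurableSpace X] (μ : Measure X)
    [IsFiniteMeasure μ] : Monotone fun x => (μ (Iic x)).toReal := fun _ _ hxy =>
  ENNReal.toReal_mono (measure_ne_top μ _) (measure_mono (Iic_subset_Iic.2 hxy))

section CDF

variable {X : Type*} [LinearOrder X] [TopologicalSpace X] [OrderTopology X]
  [MeasurableSpace X] [OpensMeasurableSpace X]

theorem tendsto_measure_Iic_nhdsGT [DenselyOrdered X] [FirstCountableTopology X]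
    (μ : Measure X) [IsFiniteMeasure μ] (a : X) :
    Tendsto (fun x => μ (Iic x)) (𝓝[>] a) (𝓝 (μ (Iic a))) := by
  rcases (Ioi a).eq_empty_or_nonempty with ha | ⟨b, hab⟩
  · simp [ha]
  have hIic : ⋂ r > a, Iic r = Iic a := by
    refine Subset.antisymm (fun x hx => not_lt.1 fun hax => ?_) fun x hx => ?_
    · obtain ⟨c, hac, hcx⟩ := exists_between hax
      exact (mem_iInter₂.1 hx c hac).not_gt hcx
    · exact mem_iInter₂.2 fun r hr => le_trans hx hr.le
  rw [← hIic]
  exact tendsto_measure_biInter_gt (fun r _ => measurableSet_Iic.nullMeasurableSet)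
    (fun _ _ _ hij => Iic_subset_Iic.2 hij) ⟨b, hab, measure_ne_top μ _⟩

theorem measure_Ioc_eq_zero_of_measure_Iic_le (μ : Measure X) [IsFiniteMeasure μ] {x y : X}
    (hyx : y ≤ x) (h : μ (Iic x) ≤ μ (Iic y)) : μ (Ioc y x) = 0 := by
  rw [← Iic_sdiff_Iic, measure_sdiff (Iic_subset_Iic.2 hyx) measurableSet_Iic.nullMeasurableSet
    (measure_ne_top μ _), tsub_eq_zero_of_le h]

end CDF

section GeneralizedInverse

variable {α β : Type*} [CompleteLinearOrder α] [TopologicalSpace α] [OrderTopology α]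
  [DenselyOrdered α] [Preorder β] [TopologicalSpace β] [OrderClosedTopology β]

theorem le_apply_sInf_setOf_le_apply {f : α → β} (hf : Monotone f)
    (hcont : ∀ a, ContinuousWithinAt f (Ioi a) a) {t : β} (ht : t ≤ f ⊤) :
    t ≤ f (sInf {x | t ≤ f x}) := by
  set a := sInf {x | t ≤ f x}
  rcases eq_top_or_lt_top a with ha | ha
  · rwa [ha]
  have : (𝓝[>] a).NeBot := nhdsGT_neBot_of_exists_gt ⟨⊤, ha⟩
  refine ge_of_tendsto (hcont a) (eventually_nhdsWithin_of_forall fun z hz => ?_)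
  obtain ⟨w, hw, hwz⟩ := sInf_lt_iff.1 (show a < z from hz)
  exact hw.trans (hf hwz.le)

theorem le_toReal_measure_Iic_sInf [FirstCountableTopology α] [MeasurableSpace α]
    [OpensMeasurableSpace α] (μ : Measure α) [IsProbabilityMeasure μ] {t : ℝ} (ht : t ≤ 1) :
    t ≤ (μ (Iic (sInf {x | t ≤ (μ (Iic x)).toReal}))).toReal := by
  refine le_apply_sInf_setOf_le_apply (monotone_toReal_measure_Iic μ) (fun a => ?_)
    (by simpa using ht)
  exact (ENNReal.tendsto_toReal (measure_ne_top μ _)).comp (tendsto_measure_Iic_nhdsGT μ a)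

end GeneralizedInverse

theorem image_eq_setOf_apply_apply_eq {α β : Type*} [PartialOrder α] [Preorder β]
    {f : α → β} {g : β → α} {s : Set β} (hg : Monotone g) (hgf : ∀ x, g (f x) ≤ x)
    (hfs : ∀ x, f x ∈ s) (hs : ∀ t ∈ s, t ≤ f (g t)) :
    g '' s = {x | g (f x) = x} := by
  ext x
  constructor
  · rintro ⟨t, ht, rfl⟩
    exact (hgf _).antisymm (hg (hs t ht))
  · intro hx
    exact ⟨f x, hfs x, hx⟩

/-- For a probability measure `P` on `ℝ̄` with CDF `F` and quantile function
`R(t) = inf{x | F(x) ≥ t}`, the set `C = ℝ̄ \ R([0,1])` is measurable with `P(C) = 0`;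
equivalently `R(F(x)) = x` for `P`-almost all `x`. -/
theorem stmt14 (P : Measure EReal) [IsProbabilityMeasure P]
    (F : EReal → ℝ) (hF : ∀ x, F x = (P (Set.Iic x)).toReal)
    (R : ℝ → EReal) (hR : ∀ t, R t = sInf {x : EReal | t ≤ F x}) :
    MeasurableSet ((R '' Set.Icc (0 : ℝ) 1)ᶜ) ∧
    P ((R '' Set.Icc (0 : ℝ) 1)ᶜ) = 0 ∧
    ∀ᵐ x ∂P, R (F x) = x := by
  have hF_mono : Monotone F := funext hF ▸ monotone_toReal_measure_Iic P
  have hR_mono : Monotone R := fun s t hst => by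
    simp only [hR]
    exact sInf_le_sInf fun z hz => hst.trans hz
  have hRF : ∀ x, R (F x) ≤ x := fun x => (hR _).trans_le (sInf_le (le_refl (F x)))
  have hFR : ∀ t ∈ Icc (0 : ℝ) 1, t ≤ F (R t) := fun t ht => by
    simpa only [hR, hF] using le_toReal_measure_Iic_sInf P ht.2
  have hfix : R '' Icc 0 1 = {x | R (F x) = x} :=
    image_eq_setOf_apply_apply_eq hR_mono hRF
      (fun x => ⟨(hF x).symm ▸ ENNReal.toReal_nonneg, (hF x).symm ▸ measureReal_le_one⟩) hFR
  have hC : (R '' Icc 0 1)ᶜ = {x | R (F x) < x} := by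
    ext x
    simp [hfix, (hRF x).lt_iff_ne]
  have hC_null : P {x | R (F x) < x} = 0 := by
    refine measure_mono_null (fun x hx => ?_) (measure_setOf_exists_lt_measure_Ioc_eq_zero P)
    obtain ⟨y, hFxy, hyx⟩ := sInf_lt_iff.1 ((hR _).symm.trans_lt hx)
    refine ⟨y, hyx, measure_Ioc_eq_zero_of_measure_Iic_le P hyx.le ?_⟩
    rw [mem_ofPred_eq, hF, hF] at hFxy
    exact (ENNReal.toReal_le_toReal (measure_ne_top P _) (measure_ne_top P _)).1 hFxy
  refine ⟨hC ▸ measurableSet_lt (hR_mono.comp hF_mono).measurable measurable_id, hC ▸ hC_null, ?_⟩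
  filter_upwards [measure_eq_zero_iff_ae_notMem.1 (hC ▸ hC_null)] with x hx
  simpa [hfix] using hx
end

section
/- Weak union (right) for transitional conditional independence: Let K(X,Y,U,Z|T) : T ⤳ X×Y×U×Z be a Markov kernel. If there exists a Markov kernel Q(X|Z) : Z ⤳ X with K(X,Y,U,Z|T) = Q(X|Z) ⊗ K(Y,U,Z|T), then there exists a Markov kernel Q'(X|U,Z) : U×Z ⤳ X with K(X,Y,U,Z|T) = Q'(X|U,Z) ⊗ K(Y,U,Z|T), namely Q'(X|U=u,Z=z) := Q(X|Z=z). -/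
open MeasureTheory ProbabilityTheory

/-- Right weak union for transitional conditional independence: if a joint Markov kernel
`K : T ⤳ X × Y × U × Z` factorizes as `K = Q(X|Z) ⊗ K(Y,U,Z|T)` for a Markov kernel
`Q : Z ⤳ X`, then it also factorizes as `K = Q'(X|U,Z) ⊗ K(Y,U,Z|T)` for a Markov kernel
`Q' : U × Z ⤳ X`, namely `Q'(·|u,z) = Q(·|z)`. -/
theorem stmt19 {T X Y U Z : Type*} [MeasurableSpace T] [MeasurableSpace X]
    [MeasurableSpace Y] [MeasurableSpace U] [MeasurableSpace Z]
    (K : Kernel T (X × Y × U × Z)) [IsMarkovKernel K]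
    (Q : Kernel Z X) [IsMarkovKernel Q]
    (hQ : ∀ t, K t =
      ((K t).map Prod.snd).bind (fun p : Y × U × Z => (Q p.2.2).map (fun x => (x, p)))) :
    ∃ Q' : Kernel (U × Z) X, IsMarkovKernel Q' ∧ (∀ u z, Q' (u, z) = Q z) ∧
      ∀ t, K t =
        ((K t).map Prod.snd).bind (fun p : Y × U × Z => (Q' p.2).map (fun x => (x, p))) := by
  refine ⟨Q.comap Prod.snd measurable_snd, ?_, fun u z => rfl, fun t => hQ t⟩
  constructor
  intro a
  simpa using (inferInstance : IsMarkovKernel Q).isProbabilityMeasure a.2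
end
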